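/- arXiv:2411.10451 — 6 statements merged into one kernel-verified Lean document; each statement's English description precedes it below -/
import Mathlib

section
/- Let m ≥ 1, let B⁽⁰⁾, …, B⁽ᵐ⁻¹⁾ be N×N real matrices and ψ⁽⁰⁾, …, ψ⁽ᵐ⁻¹⁾ ∈ ℝ^N. Given v⁽⁰⁾ ∈ ℝ^N, define recursively v⁽ᵏ⁺¹⁾ = B⁽ᵏ⁾v⁽ᵏ⁾/(1 + ψ⁽ᵏ⁾ᵀv⁽ᵏ⁾), assuming 1 + ψ⁽ᵏ⁾ᵀv⁽ᵏ⁾ ≠ 0 for every k < m. Define B^{(k,0)} = B⁽ᵏ⁻¹⁾B⁽ᵏ⁻²⁾⋯B⁽⁰⁾ and ψ^{(m,0)} = ψ⁽⁰⁾ + Σ_{k=1}^{m−1} (B^{(k,0)})ᵀ ψ⁽ᵏ⁾. Then 1 + ψ^{(m,0)ᵀ}v⁽⁰⁾ = ∏_{k=0}^{m−1} (1 + ψ⁽ᵏ⁾ᵀv⁽ᵏ⁾) and v⁽ᵐ⁾ = B^{(m,0)} v⁽⁰⁾ / (1 + ψ^{(m,0)ᵀ}v⁽⁰⁾). -/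
/-!
Write `dₖ = 1 + ψ⁽ᵏ⁾ᵀv⁽ᵏ⁾` and `Dₖ = d₀⋯dₖ₋₁`. Clearing denominators along the recursion gives
`Dₖ v⁽ᵏ⁾ = B^{(k,0)} v⁽⁰⁾`, so `ψ⁽ᵏ⁾ᵀB^{(k,0)} v⁽⁰⁾ = Dₖ (dₖ - 1) = Dₖ₊₁ - Dₖ`, and summing this
telescoping identity over `k < m` yields `1 + ψ^{(m,0)ᵀ} v⁽⁰⁾ = Dₘ`.
-/

open Matrix Finset

theorem List.prod_map_range_succ_reverse {M : Type*} [Monoid M] (f : ℕ → M) (k : ℕ) :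
    ((List.range (k + 1)).reverse.map f).prod = f k * ((List.range k).reverse.map f).prod := by
  simp [List.range_succ]

section FractionalLinear

variable {n 𝕜 : Type*} [Fintype n] [DecidableEq n] [Field 𝕜]
  {B P : ℕ → Matrix n n 𝕜} {ψ v : ℕ → n → 𝕜}

theorem prod_denom_smul_eq_mulVec (hP : ∀ k, P (k + 1) = B k * P k) (hP0 : P 0 = 1) {m : ℕ}
    (hden : ∀ k < m, 1 + ψ k ⬝ᵥ v k ≠ 0)
    (hrec : ∀ k < m, v (k + 1) = (1 + ψ k ⬝ᵥ v k)⁻¹ • B k *ᵥ v k) :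
    (∏ k ∈ range m, (1 + ψ k ⬝ᵥ v k)) • v m = P m *ᵥ v 0 := by
  induction m with
  | zero => simp [hP0]
  | succ m ih =>
    have ih := ih (fun k hk => hden k (by omega)) (fun k hk => hrec k (by omega))
    rw [prod_range_succ, hrec m (by omega), smul_smul, mul_assoc,
      mul_inv_cancel₀ (hden m (by omega)), mul_one, hP, ← mulVec_mulVec, ← ih, mulVec_smul]

theorem one_add_sum_dotProduct_mulVec (hP : ∀ k, P (k + 1) = B k * P k) (hP0 : P 0 = 1)
    {m : ℕ} (hden : ∀ k < m, 1 + ψ k ⬝ᵥ v k ≠ 0)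
    (hrec : ∀ k < m, v (k + 1) = (1 + ψ k ⬝ᵥ v k)⁻¹ • B k *ᵥ v k) :
    1 + ∑ k ∈ range m, ψ k ⬝ᵥ P k *ᵥ v 0 = ∏ k ∈ range m, (1 + ψ k ⬝ᵥ v k) := by
  induction m with
  | zero => simp
  | succ m ih =>
    have hden' : ∀ k < m, 1 + ψ k ⬝ᵥ v k ≠ 0 := fun k hk => hden k (by omega)
    have hrec' : ∀ k < m, v (k + 1) = (1 + ψ k ⬝ᵥ v k)⁻¹ • B k *ᵥ v k :=
      fun k hk => hrec k (by omega)
    rw [sum_range_succ, ← add_assoc, ih hden' hrec', prod_range_succ,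
      ← prod_denom_smul_eq_mulVec hP hP0 hden' hrec', dotProduct_smul, smul_eq_mul]
    ring

end FractionalLinear

/-- Composing `m` fractional-linear wall-to-wall transition maps:
with `B^{(k,0)} = B⁽ᵏ⁻¹⁾⋯B⁽⁰⁾` and `ψ^{(m,0)} = ψ⁽⁰⁾ + Σ_{k=1}^{m−1} B^{(k,0)ᵀ} ψ⁽ᵏ⁾`,
the composite denominator is the product of the step denominators and
`v⁽ᵐ⁾ = B^{(m,0)} v⁽⁰⁾ / (1 + ψ^{(m,0)ᵀ} v⁽⁰⁾)`. -/
theorem stmt3 (N m : ℕ) (hm : 1 ≤ m)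
    (B : ℕ → Matrix (Fin N) (Fin N) ℝ) (ψ : ℕ → Fin N → ℝ)
    (v : ℕ → Fin N → ℝ)
    (hden : ∀ k < m, 1 + ψ k ⬝ᵥ v k ≠ 0)
    (hrec : ∀ k < m, v (k+1) = (1 + ψ k ⬝ᵥ v k)⁻¹ • (B k).mulVec (v k))
    (Bprod : ℕ → Matrix (Fin N) (Fin N) ℝ)
    (hBprod : ∀ k, Bprod k = ((List.range k).reverse.map B).prod)
    (ψm : Fin N → ℝ)
    (hψm : ψm = ψ 0 + ∑ k ∈ Finset.Ico 1 m, (Bprod k)ᵀ.mulVec (ψ k)) :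
    1 + ψm ⬝ᵥ v 0 = ∏ k ∈ Finset.range m, (1 + ψ k ⬝ᵥ v k) ∧
    v m = (1 + ψm ⬝ᵥ v 0)⁻¹ • (Bprod m).mulVec (v 0) := by
  have hP : ∀ k, Bprod (k + 1) = B k * Bprod k := fun k => by
    rw [hBprod, hBprod, List.prod_map_range_succ_reverse]
  have hP0 : Bprod 0 = 1 := by simp [hBprod]
  have hψm_dot : ψm ⬝ᵥ v 0 = ∑ k ∈ range m, ψ k ⬝ᵥ Bprod k *ᵥ v 0 := by
    rw [hψm, add_dotProduct, sum_dotProduct, range_eq_Ico, sum_eq_sum_Ico_succ_bot hm, hP0,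
      one_mulVec]
    simp only [dotProduct_comm _ (v 0), dotProduct_transpose_mulVec]
  have hdenom : 1 + ψm ⬝ᵥ v 0 = ∏ k ∈ range m, (1 + ψ k ⬝ᵥ v k) := by
    rw [hψm_dot, one_add_sum_dotProduct_mulVec hP hP0 hden hrec]
  refine ⟨hdenom, ?_⟩
  have hprod_ne : ∏ k ∈ range m, (1 + ψ k ⬝ᵥ v k) ≠ 0 :=
    prod_ne_zero_iff.2 fun k hk => hden k (mem_range.1 hk)
  rw [hdenom, ← prod_denom_smul_eq_mulVec hP hP0 hden hrec, smul_smul, inv_mul_cancel₀ hprod_ne,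
    one_smul]
end

section
/- Let φ, v⁰ ∈ ℝ^N and let j ≠ i be indices with φ_j ≠ 0, φ_i ≠ 0, v⁰_j·φ_j < 0 and v⁰_i·φ_i < 0. Let v(t) = φ + (v⁰ − φ)e^{−t}, and let t_j = log(1 − v⁰_j/φ_j) and t_i = log(1 − v⁰_i/φ_i) be the crossing times of the walls {v_j = 0} and {v_i = 0} respectively. Then t_j < t_i if and only if −(1/φ_i) e_iᵀ (I − (1/φ_j) φ e_jᵀ) v⁰ > 0. -/
open Matrix

/-- For a trajectory `v(t) = φ + (v⁰ − φ)e^{−t}` in a box of a Glass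
network with two possible exit walls `{v_j = 0}` and `{v_i = 0}`, the crossing time of
wall `j` precedes that of wall `i` if and only if
`−(1/φ_i) e_iᵀ (I − (1/φ_j) φ e_jᵀ) v⁰ > 0`:  the single-step returning-cone condition. -/
theorem stmt4 (N : ℕ) (φ v0 : Fin N → ℝ) (j i : Fin N) (hij : j ≠ i)
    (hφj : φ j ≠ 0) (hφi : φ i ≠ 0)
    (hsj : v0 j * φ j < 0) (hsi : v0 i * φ i < 0)
    (v : ℝ → Fin N → ℝ)
    (hv : ∀ t, v t = fun k => φ k + (v0 k - φ k) * Real.exp (-t))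
    (tj ti : ℝ)
    (htj : tj = Real.log (1 - v0 j / φ j)) (hti : ti = Real.log (1 - v0 i / φ i))
    (B : Matrix (Fin N) (Fin N) ℝ)
    (hB : B = 1 - (φ j)⁻¹ • Matrix.vecMulVec φ (Pi.single j (1:ℝ))) :
    tj < ti ↔ -(φ i)⁻¹ * (B.mulVec v0) i > 0 := by
  have hBv : (B.mulVec v0) i = v0 i - (φ j)⁻¹ * (φ i * v0 j) := by
    subst hB
    simp [Matrix.sub_mulVec, Matrix.mulVec, Matrix.one_apply, Matrix.vecMulVec,
      dotProduct, Pi.single_apply, Finset.mul_sum, mul_ite, Finset.sum_ite_eq',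
      eq_comm (a := i)]
    rw [show (fun x => ((if x = i then (1:ℝ) else 0) - if x = j then (φ j)⁻¹ * φ i else 0) * v0 x)
        = fun x => ((if x = i then (1:ℝ) else 0) * v0 x - (if x = j then (φ j)⁻¹ * φ i else 0) * v0 x)
      from funext fun x => by ring, Finset.sum_sub_distrib]
    simp [Finset.sum_ite_eq', mul_assoc]
  have hrj : v0 j / φ j < 0 := by
    have h2 : v0 j / φ j = (v0 j * φ j) / (φ j)^2 := by field_simp
    rw [h2]; exact div_neg_of_neg_of_pos hsj (by positivity)
  have hri : v0 i / φ i < 0 := by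
    have h2 : v0 i / φ i = (v0 i * φ i) / (φ i)^2 := by field_simp
    rw [h2]; exact div_neg_of_neg_of_pos hsi (by positivity)
  have hpj : (0:ℝ) < 1 - v0 j / φ j := by linarith
  have hpi : (0:ℝ) < 1 - v0 i / φ i := by linarith
  rw [htj, hti, Real.log_lt_log_iff hpj hpi, hBv]
  have key : -(φ i)⁻¹ * (v0 i - (φ j)⁻¹ * (φ i * v0 j)) = v0 j / φ j - v0 i / φ i := by
    field_simp
    ring
  rw [key]
  constructor <;> intro h <;> · simp only [gt_iff_lt] at * ; linarith
end

section
/- Let m ≥ 1, let B⁽⁰⁾, …, B⁽ᵐ⁻¹⁾ be N×N real matrices and ψ⁽⁰⁾, …, ψ⁽ᵐ⁻¹⁾ ∈ ℝ^N, and let v⁽⁰⁾ ∈ ℝ^N with the recursion v⁽ᵏ⁺¹⁾ = B⁽ᵏ⁾v⁽ᵏ⁾/(1 + ψ⁽ᵏ⁾ᵀv⁽ᵏ⁾), where 1 + ψ⁽ᵏ⁾ᵀv⁽ᵏ⁾ > 0 for every k < m. Suppose the cycle closes: v⁽ᵐ⁾ = v⁽⁰⁾. Define the step times t_k = log(1 +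 ψ⁽ᵏ⁾ᵀv⁽ᵏ⁾) and λ = 1 + ψ^{(m,0)ᵀ}v⁽⁰⁾ where ψ^{(m,0)} = ψ⁽⁰⁾ + Σ_{k=1}^{m−1} (B⁽ᵏ⁻¹⁾⋯B⁽⁰⁾)ᵀ ψ⁽ᵏ⁾. Then B⁽ᵐ⁻¹⁾⋯B⁽⁰⁾ v⁽⁰⁾ = λ v⁽⁰⁾ and the total traversal time satisfies Σ_{k=0}^{m−1} t_k = log λ; i.e., the period of the periodic orbit equals the logarithm of the eigenvalue of the cycle-map matrix corresponding to the fixed point. -/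
open Matrix Finset

theorem Finset.prod_range_one_add_eq_one_add_sum {R : Type*} [CommRing R] (a : ℕ → R) (n : ℕ) :
    ∏ j ∈ range n, (1 + a j) = 1 + ∑ k ∈ range n, (∏ j ∈ range k, (1 + a j)) * a k := by
  have telescope := Finset.sum_range_sub (fun k => ∏ j ∈ range k, (1 + a j)) n
  simp only [prod_range_succ, prod_range_zero, mul_one_add, add_sub_cancel_left] at telescope
  rw [telescope, add_sub_cancel]

section GlassCycle

variable {𝕜 ι : Type*} [Field 𝕜] [Fintype ι] [DecidableEq ι]
  (B : ℕ → Matrix ι ι 𝕜) (ψ : ℕ → ι → 𝕜) (v : ℕ → ι → 𝕜)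

theorem prod_mulVec_eq_prod_smul (n : ℕ) (hden : ∀ k < n, 1 + ψ k ⬝ᵥ v k ≠ 0)
    (hrec : ∀ k < n, v (k + 1) = (1 + ψ k ⬝ᵥ v k)⁻¹ • (B k).mulVec (v k)) :
    (((List.range n).reverse.map B).prod).mulVec (v 0) =
      (∏ k ∈ range n, (1 + ψ k ⬝ᵥ v k)) • v n := by
  induction n with
  | zero => simp
  | succ n ih =>
    have hn := n.lt_succ_self
    have step : (B n).mulVec (v n) = (1 + ψ n ⬝ᵥ v n) • v (n + 1) :=
      (inv_smul_eq_iff₀ (hden n hn)).mp (hrec n hn).symm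
    rw [List.prod_map_range_succ_reverse, ← mulVec_mulVec,
      ih (fun k hk => hden k (hk.trans hn)) (fun k hk => hrec k (hk.trans hn)),
      mulVec_smul, step, smul_smul, prod_range_succ]

theorem one_add_dotProduct_eq_prod {m : ℕ} (hm : 1 ≤ m) (hden : ∀ k < m, 1 + ψ k ⬝ᵥ v k ≠ 0)
    (hrec : ∀ k < m, v (k + 1) = (1 + ψ k ⬝ᵥ v k)⁻¹ • (B k).mulVec (v k)) :
    1 + (ψ 0 + ∑ k ∈ Ico 1 m, (((List.range k).reverse.map B).prod)ᵀ.mulVec (ψ k)) ⬝ᵥ v 0 =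
      ∏ k ∈ range m, (1 + ψ k ⬝ᵥ v k) := by
  have hsum : ψ 0 + ∑ k ∈ Ico 1 m, (((List.range k).reverse.map B).prod)ᵀ.mulVec (ψ k) =
      ∑ k ∈ range m, (((List.range k).reverse.map B).prod)ᵀ.mulVec (ψ k) := by
    rw [range_eq_Ico, sum_eq_sum_Ico_succ_bot hm]
    simp
  have hterm : ∀ k ∈ range m, (((List.range k).reverse.map B).prod)ᵀ.mulVec (ψ k) ⬝ᵥ v 0 =
      (∏ j ∈ range k, (1 + ψ j ⬝ᵥ v j)) * (ψ k ⬝ᵥ v k) := by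
    intro k hk
    have hkm : k < m := mem_range.mp hk
    rw [mulVec_transpose, ← dotProduct_mulVec,
      prod_mulVec_eq_prod_smul B ψ v k (fun j hj => hden j (hj.trans hkm))
        (fun j hj => hrec j (hj.trans hkm)),
      dotProduct_smul, smul_eq_mul]
  rw [hsum, sum_dotProduct, sum_congr rfl hterm, prod_range_one_add_eq_one_add_sum]

end GlassCycle

/-- If the fractional-linear wall-to-wall maps of a Glass network
close up into a cycle (`v⁽ᵐ⁾ = v⁽⁰⁾`) with positive denominators, then `v⁽⁰⁾` is an
eigenvector of the cycle-map matrix `B⁽ᵐ⁻¹⁾⋯B⁽⁰⁾` with eigenvalue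
`λ = 1 + ψ^{(m,0)ᵀ}v⁽⁰⁾`, and the total traversal time (the period of the periodic
orbit) equals `log λ`. -/
theorem stmt8 (N m : ℕ) (hm : 1 ≤ m)
    (B : ℕ → Matrix (Fin N) (Fin N) ℝ) (ψ : ℕ → Fin N → ℝ)
    (v : ℕ → Fin N → ℝ)
    (hden : ∀ k < m, 0 < 1 + ψ k ⬝ᵥ v k)
    (hrec : ∀ k < m, v (k+1) = (1 + ψ k ⬝ᵥ v k)⁻¹ • (B k).mulVec (v k))
    (hclose : v m = v 0)
    (t : ℕ → ℝ) (ht : ∀ k, t k = Real.log (1 + ψ k ⬝ᵥ v k))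
    (lam : ℝ)
    (hlam : lam = 1 + (ψ 0 + ∑ k ∈ Finset.Ico 1 m,
      (((List.range k).reverse.map B).prod)ᵀ.mulVec (ψ k)) ⬝ᵥ v 0) :
    (((List.range m).reverse.map B).prod).mulVec (v 0) = lam • v 0 ∧
    ∑ k ∈ Finset.range m, t k = Real.log lam := by
  have hden' : ∀ k < m, 1 + ψ k ⬝ᵥ v k ≠ 0 := fun k hk => (hden k hk).ne'
  have hlam_prod : lam = ∏ k ∈ range m, (1 + ψ k ⬝ᵥ v k) :=
    hlam.trans (one_add_dotProduct_eq_prod B ψ v hm hden' hrec)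
  constructor
  · rw [prod_mulVec_eq_prod_smul B ψ v m hden' hrec, hclose, hlam_prod]
  · rw [hlam_prod, Real.log_prod fun k hk => hden' k (mem_range.mp hk)]
    exact sum_congr rfl fun k _ => ht k
end

section
/- Let B be an N×N matrix over a field, let w ≠ 0 satisfy Bw = λw, let ψ be a vector with ψᵀw ≠ 0, and set v* = ((λ − 1)/(ψᵀw))·w. Then the characteristic polynomials satisfy (X − λ)·charpoly(B − v*ψᵀ) = (X − 1)·charpoly(B). In particular, the eigenvalue spectrum of B − v*ψᵀ is obtained from that of B by replacing one copy of λ with 1, so the eigenvalues of the derivative (1/λ)(B − v*ψᵀ) of the return map at the fixed point are 1/λ together with μ/λ for the remaining eigenvalues μ of B. -/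
/-!
This is Brauer's rank-one perturbation theorem. Over any commutative ring, if `M *ᵥ x = u` then
`M + u vᵀ = M (1 + x vᵀ)`, so `det (M + u vᵀ) = det M * (1 + v ⬝ᵥ x)`. Applied to
`M = t - B`, which maps `(t - λ)⁻¹ w` to `w`, this gives
`(t - λ) det (t - (B - w ψᵀ)) = (t - (λ - ψ ⬝ᵥ w)) det (t - B)`; taking `t = X` in the fraction
field of `R[X]` yields the polynomial identity. For `v* = c w` with `c ψ ⬝ᵥ w = λ - 1`, the
eigenvalue `λ - c ψ ⬝ᵥ w` is `1`.
-/

open Matrix Polynomial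

namespace Matrix

variable {n R : Type*} [Fintype n] [DecidableEq n]

theorem det_add_vecMulVec_of_mulVec_eq [CommRing R] {M : Matrix n n R} {x u : n → R}
    (hx : M *ᵥ x = u) (v : n → R) :
    (M + vecMulVec u v).det = M.det * (1 + v ⬝ᵥ x) := by
  rw [← hx, ← mul_vecMulVec, ← mul_one_add, det_mul, vecMulVec_eq (Fin 1),
    det_one_add_replicateCol_mul_replicateRow]

theorem det_scalar_sub_sub_vecMulVec {F : Type*} [Field F] {B : Matrix n n F} {w : n → F}
    {lam : F} (hB : B *ᵥ w = lam • w) (ψ : n → F) {t : F} (ht : t ≠ lam) :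
    (t - lam) * (scalar n t - (B - vecMulVec w ψ)).det
      = (t - (lam - ψ ⬝ᵥ w)) * (scalar n t - B).det := by
  have htl : t - lam ≠ 0 := sub_ne_zero.mpr ht
  have hx : (scalar n t - B) *ᵥ ((t - lam)⁻¹ • w) = w := by
    have hscalar : scalar n t *ᵥ w = t • w := by ext; simp [scalar_apply, mulVec_diagonal]
    rw [mulVec_smul, sub_mulVec, hB, hscalar, ← sub_smul, smul_smul, inv_mul_cancel₀ htl,
      one_smul]
  rw [sub_sub_eq_add_sub, add_sub_right_comm, det_add_vecMulVec_of_mulVec_eq hx, dotProduct_smul,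
    smul_eq_mul]
  field_simp
  ring

theorem map_charpoly_eq_det {S : Type*} [CommRing R] [CommRing S] (f : R[X] →+* S)
    (B : Matrix n n R) :
    f B.charpoly = (scalar n (f X) - B.map (f.comp C)).det := by
  rw [charpoly, RingHom.map_det]
  congr 1
  ext i j
  by_cases h : i = j <;> simp [h]

theorem charpoly_sub_vecMulVec_of_mulVec_eq_smul [CommRing R] [IsDomain R] {B : Matrix n n R}
    {w : n → R} {lam : R} (hB : B *ᵥ w = lam • w) (ψ : n → R) :
    (X - C lam) * (B - vecMulVec w ψ).charpoly = (X - C (lam - ψ ⬝ᵥ w)) * B.charpoly := by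
  let f := algebraMap R[X] (FractionRing R[X])
  let φ := f.comp C
  have hf : Function.Injective f := IsFractionRing.injective R[X] (FractionRing R[X])
  have hBφ : B.map φ *ᵥ (φ ∘ w) = φ lam • (φ ∘ w) := by
    ext i
    rw [← RingHom.map_mulVec, hB]
    simp
  have hX : f X ≠ φ lam := fun h ↦ X_sub_C_ne_zero lam (hf (by simp [φ, h]))
  have hmap : (B - vecMulVec w ψ).map φ = B.map φ - vecMulVec (φ ∘ w) (φ ∘ ψ) := by
    ext i j
    simp [vecMulVec_apply]
  apply hf
  have hdot : f (C (lam - ψ ⬝ᵥ w)) = φ lam - (φ ∘ ψ) ⬝ᵥ (φ ∘ w) := by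
    rw [← RingHom.map_dotProduct, ← map_sub]
    rfl
  rw [map_mul, map_mul, map_charpoly_eq_det, map_charpoly_eq_det, map_sub, map_sub, hdot]
  change _ * (scalar n (f X) - (B - vecMulVec w ψ).map φ).det = _ * (_ - B.map φ).det
  rw [hmap]
  exact det_scalar_sub_sub_vecMulVec hBφ (φ ∘ ψ) hX

end Matrix

theorem stmt10_general (K : Type*) [Field K] (N : ℕ) (B : Matrix (Fin N) (Fin N) K)
    (ψ w : Fin N → K) (lam : K)
    (heig : B.mulVec w = lam • w) (hψw : ψ ⬝ᵥ w ≠ 0)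
    (vstar : Fin N → K) (hv : vstar = ((lam - 1) / (ψ ⬝ᵥ w)) • w) :
    (X - C lam) * (B - Matrix.vecMulVec vstar ψ).charpoly
      = (X - C 1) * B.charpoly := by
  have hrank_one : vecMulVec vstar ψ = vecMulVec w (((lam - 1) / (ψ ⬝ᵥ w)) • ψ) := by
    rw [hv, smul_vecMulVec, vecMulVec_smul]
  have heig_shift : lam - ((lam - 1) / (ψ ⬝ᵥ w)) • ψ ⬝ᵥ w = 1 := by
    rw [smul_dotProduct, smul_eq_mul, div_mul_cancel₀ _ hψw, sub_sub_cancel]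
  rw [hrank_one, charpoly_sub_vecMulVec_of_mulVec_eq_smul heig, heig_shift]

/-- If `Bw = λw` with `w ≠ 0`, `ψᵀw ≠ 0`, and
`v* = ((λ − 1)/(ψᵀw))·w`, then the characteristic polynomials satisfy
`(X − λ)·charpoly(B − v*ψᵀ) = (X − 1)·charpoly(B)`: the spectrum of `B − v*ψᵀ` is
that of `B` with one copy of `λ` replaced by `1`. -/
theorem stmt10 (K : Type*) [Field K] (N : ℕ) (B : Matrix (Fin N) (Fin N) K)
    (ψ w : Fin N → K) (lam : K)
    (hw : w ≠ 0) (heig : B.mulVec w = lam • w) (hψw : ψ ⬝ᵥ w ≠ 0)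
    (vstar : Fin N → K) (hv : vstar = ((lam - 1) / (ψ ⬝ᵥ w)) • w) :
    (X - C lam) * (B - Matrix.vecMulVec vstar ψ).charpoly
      = (X - C 1) * B.charpoly :=
  stmt10_general K N B ψ w lam heig hψw vstar hv
end

section
/- For real parameters κ₁, κ₂ with d₁ := 1 − 2κ₁ ≠ 0 and d₂ := 1 − 2κ₂, let B_P(κ₁, κ₂) be the 9×9 real matrix whose rows are: row 1 = (0,0,0, 1/d₁, 0, −1/d₁, 0,0,0); row 2 = (0,0,0, 1/d₁ − d₂, 1, −1/d₁, 0,0,0); row 3 = (0,0,0, 2κ₁d₂/d₁, 0, −d₂/d₁, 1, 0, 0); row 4 = (0,0,0, 2κ₁, 0, −1, 0, 1, 0); row 5 = (0,0,0, 2κ₁d₂/d₁, 0, −d₂/d₁, 0, 0, 1); row 6 = (1,0,0, 2κ₁/d₁, 0, −1/d₁, 0,0,0); row 7 = (0,1,0, 2κ₁d₂/d₁, 0, −d₂/d₁, 0,0,0); row 8 = (0,0,0, 2κ₁, 0, −1, 0,0,0); row 9 = (0,0,1, 2κ₁d₂/d₁, 0, −d₂/d₁, 0,0,0). Then the characteristic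 polynomial of B_P(κ₁, κ₂) does not depend on κ₂: for all κ₂, κ₂′ with the matrices defined, charpoly(B_P(κ₁, κ₂)) = charpoly(B_P(κ₁, κ₂′)). In particular the eigenvalues of B_P are independent of κ₂. -/
open Matrix

/-- The matrix `B_P` of the two-step cycle map composed with the rotation permutation,
for the symmetric 10-dimensional Glass network model of the ring circuit, restricted to
the 9-dimensional starting wall.  Here `d₁ = 1 − 2κ₁` and `d₂ = 1 − 2κ₂`. -/
noncomputable def BP (κ₁ κ₂ : ℝ) : Matrix (Fin 9) (Fin 9) ℝ :=
  let d₁ : ℝ := 1 - 2*κ₁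
  let d₂ : ℝ := 1 - 2*κ₂
  !![0, 0, 0, 1/d₁,         0, -1/d₁,    0, 0, 0;
     0, 0, 0, 1/d₁ - d₂,    1, -1/d₁,    0, 0, 0;
     0, 0, 0, 2*κ₁*d₂/d₁,   0, -(d₂/d₁), 1, 0, 0;
     0, 0, 0, 2*κ₁,         0, -1,       0, 1, 0;
     0, 0, 0, 2*κ₁*d₂/d₁,   0, -(d₂/d₁), 0, 0, 1;
     1, 0, 0, 2*κ₁/d₁,      0, -1/d₁,    0, 0, 0;
     0, 1, 0, 2*κ₁*d₂/d₁,   0, -(d₂/d₁), 0, 0, 0;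
     0, 0, 0, 2*κ₁,         0, -1,       0, 0, 0;
     0, 0, 1, 2*κ₁*d₂/d₁,   0, -(d₂/d₁), 0, 0, 0]

/-- The reindexing equivalence putting `B_P` in block upper triangular form:
new order of old coordinates is `(2,3,5,7,9 | 1,4,6,8)` (1-based). -/
def eqvBP : Fin 5 ⊕ Fin 4 ≃ Fin 9 where
  toFun := Sum.elim ![1, 2, 4, 6, 8] ![0, 3, 5, 7]
  invFun := ![Sum.inr 0, Sum.inl 0, Sum.inl 1, Sum.inr 1, Sum.inl 2,
              Sum.inr 2, Sum.inl 3, Sum.inr 3, Sum.inl 4]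
  left_inv := by decide
  right_inv := by decide

/-- Upper-left block: the 5-cycle on the invariant subspace spanned by
old coordinates `2,3,5,7,9`. -/
noncomputable def CmBP : Matrix (Fin 5) (Fin 5) ℝ :=
  !![0, 0, 1, 0, 0;
     0, 0, 0, 1, 0;
     0, 0, 0, 0, 1;
     1, 0, 0, 0, 0;
     0, 1, 0, 0, 0]

/-- Lower-right block, independent of `κ₂`. -/
noncomputable def EmBP (κ₁ : ℝ) : Matrix (Fin 4) (Fin 4) ℝ :=
  let d₁ : ℝ := 1 - 2*κ₁
  !![0, 1/d₁,    -1/d₁, 0;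
     0, 2*κ₁,    -1,    1;
     1, 2*κ₁/d₁, -1/d₁, 0;
     0, 2*κ₁,    -1,    0]

/-- Upper-right block (the only part depending on `κ₂`). -/
noncomputable def DmBP (κ₁ κ₂ : ℝ) : Matrix (Fin 5) (Fin 4) ℝ :=
  let d₁ : ℝ := 1 - 2*κ₁
  let d₂ : ℝ := 1 - 2*κ₂
  !![0, 1/d₁ - d₂,  -1/d₁,    0;
     0, 2*κ₁*d₂/d₁, -(d₂/d₁), 0;
     0, 2*κ₁*d₂/d₁, -(d₂/d₁), 0;
     0, 2*κ₁*d₂/d₁, -(d₂/d₁), 0;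
     0, 2*κ₁*d₂/d₁, -(d₂/d₁), 0]


private lemma cons_val_five {α : Type*} {m : ℕ} (x : α) (u : Fin (m + 5) → α) :
    Matrix.vecCons x u 5 = Matrix.vecHead (Matrix.vecTail (Matrix.vecTail
      (Matrix.vecTail (Matrix.vecTail u)))) := rfl

private lemma cons_val_six {α : Type*} {m : ℕ} (x : α) (u : Fin (m + 6) → α) :
    Matrix.vecCons x u 6 = Matrix.vecHead (Matrix.vecTail (Matrix.vecTail
      (Matrix.vecTail (Matrix.vecTail (Matrix.vecTail u))))) := rfl

private lemma cons_val_seven {α : Type*} {m : ℕ} (x : α) (u : Fin (m + 7) → α) :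
    Matrix.vecCons x u 7 = Matrix.vecHead (Matrix.vecTail (Matrix.vecTail
      (Matrix.vecTail (Matrix.vecTail (Matrix.vecTail (Matrix.vecTail u)))))) := rfl

private lemma cons_val_eight {α : Type*} {m : ℕ} (x : α) (u : Fin (m + 8) → α) :
    Matrix.vecCons x u 8 = Matrix.vecHead (Matrix.vecTail (Matrix.vecTail
      (Matrix.vecTail (Matrix.vecTail (Matrix.vecTail (Matrix.vecTail (Matrix.vecTail u))))))) := rfl

set_option maxHeartbeats 1000000 in
lemma reindex_BP (κ₁ κ₂ : ℝ) :
    Matrix.reindex eqvBP.symm eqvBP.symm (BP κ₁ κ₂) =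
      Matrix.fromBlocks CmBP (DmBP κ₁ κ₂) 0 (EmBP κ₁) := by
  ext i j
  rcases i with i | i <;> rcases j with j | j <;>
    fin_cases i <;> fin_cases j <;>
      simp [BP, CmBP, DmBP, EmBP, eqvBP, Matrix.fromBlocks, -Matrix.vecCons_const,
        cons_val_five, cons_val_six, cons_val_seven, cons_val_eight]

lemma charpoly_BP (κ₁ κ₂ : ℝ) :
    (BP κ₁ κ₂).charpoly = CmBP.charpoly * (EmBP κ₁).charpoly := by
  rw [← Matrix.charpoly_reindex eqvBP.symm (BP κ₁ κ₂), reindex_BP,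
    Matrix.charpoly_fromBlocks_zero₂₁]

/-- The characteristic polynomial of `B_P(κ₁, κ₂)` does not depend on
`κ₂`; in particular the eigenvalues of `B_P` are independent of `κ₂`. -/
theorem stmt14 (κ₁ κ₂ κ₂' : ℝ) (h : 1 - 2*κ₁ ≠ 0) :
    (BP κ₁ κ₂).charpoly = (BP κ₁ κ₂').charpoly := by
  rw [charpoly_BP, charpoly_BP]
end

section
/- For all real λ, κ₁ with d₁ := 1 − 2κ₁ ≠ 0, and all real d₂, the determinant of the 7×7 matrix with rows (−λ, 0, 1, −1/d₁, 0, 0, 0), (0, 0, 1 − d₁d₂, −1/d₁, 0, 0, 0), (0, −λ, 2κ₁, −1/d₁, 1, 0, 0), (0, 0, 2κ₁ − λ, −1/d₁, 0, 1, 0), (1, 0, 2κ₁, −1/d₁ − λ, 0, 0, 0), (0, 0, 2κ₁, −1/d₁, 0, −λ, 0), (0, 1, 2κ₁, −1/d₁, 0, 0, −λ) is zero, because its second, fifth and seventh columns are linearly dependent (for λ ≠ 0, column 2 = −λ · column 5 − (1/λ) · column 7, and the determinant is a polynomial in λ, hence vanishes identically). -/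
/-!
Columns 2, 5 and 7 of the matrix vanish outside rows 3 and 7 (with `Fin 7` indexing: columns
`1, 4, 6` and rows `2, 6`). Three columns lying in a two-dimensional coordinate subspace are
linearly dependent, so the determinant vanishes for every value of the parameters.
-/

open Matrix Module Submodule

theorem Matrix.det_eq_zero_of_card_lt_of_cols_supported {n R : Type*} [Fintype n] [DecidableEq n]
    [CommRing R] [IsDomain R] (A : Matrix n n R) {S T : Finset n} (hST : T.card < S.card)
    (hA : ∀ i ∉ T, ∀ j ∈ S, A i j = 0) : A.det = 0 := by
  by_contra hdet
  have hli : LinearIndependent R fun j : S => A.col j :=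
    (linearIndependent_cols_of_det_ne_zero hdet).comp _ Subtype.val_injective
  let E := Function.ExtendByZero.linearMap R ((↑) : T → n)
  have hspan : span R (Set.range fun j : S => A.col j) ≤ LinearMap.range E := by
    refine span_le.2 ?_
    rintro _ ⟨j, rfl⟩
    refine ⟨fun i => A i j, funext fun i => ?_⟩
    change Function.extend Subtype.val (fun i : T => A i j) 0 i = A i j
    by_cases hi : i ∈ T
    · exact Subtype.val_injective.extend_apply _ _ (⟨i, hi⟩ : T)
    · rw [Function.extend_apply' _ _ _ (by simpa using hi)]
      exact (hA i hi j j.2).symm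
  have : S.card ≤ T.card :=
    calc S.card = finrank R (span R (Set.range fun j : S => A.col j)) := by
          rw [finrank_span_eq_card hli, Fintype.card_coe]
      _ ≤ finrank R (LinearMap.range E) := finrank_mono hspan
      _ ≤ finrank R (T → R) := LinearMap.finrank_range_le E
      _ = T.card := by simp
  omega

theorem stmt15_general (lam κ₁ d₂ : ℝ) :
    (!![-lam, 0,    1,              -(1/(1-2*κ₁)),       0, 0,    0;
        0,    0,    1-(1-2*κ₁)*d₂,  -(1/(1-2*κ₁)),       0, 0,    0;
        0,    -lam, 2*κ₁,           -(1/(1-2*κ₁)),       1, 0,    0;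
        0,    0,    2*κ₁ - lam,     -(1/(1-2*κ₁)),       0, 1,    0;
        1,    0,    2*κ₁,           -(1/(1-2*κ₁)) - lam, 0, 0,    0;
        0,    0,    2*κ₁,           -(1/(1-2*κ₁)),       0, -lam, 0;
        0,    1,    2*κ₁,           -(1/(1-2*κ₁)),       0, 0,    -lam] :
      Matrix (Fin 7) (Fin 7) ℝ).det = 0 := by
  refine det_eq_zero_of_card_lt_of_cols_supported _ (S := {1, 4, 6}) (T := {2, 6}) (by decide) ?_
  intro i hi j hj
  fin_cases i <;> fin_cases j <;> simp_all

/-- The 7×7 determinant arising in the cofactor expansion of the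
characteristic polynomial of `C·D₂·D₁` (in the proof that the eigenvalues of the
two-step cycle-map matrix `B_P` of the symmetric 10-dimensional ring-circuit Glass
network are independent of `κ₂`) vanishes, its second, fifth and seventh columns being
linearly dependent.  Here `d₁ = 1 − 2κ₁`. -/
theorem stmt15 (lam κ₁ d₂ : ℝ) (h : 1 - 2*κ₁ ≠ 0) :
    (!![-lam, 0,    1,              -(1/(1-2*κ₁)),       0, 0,    0;
        0,    0,    1-(1-2*κ₁)*d₂,  -(1/(1-2*κ₁)),       0, 0,    0;
        0,    -lam, 2*κ₁,           -(1/(1-2*κ₁)),       1, 0,    0;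
        0,    0,    2*κ₁ - lam,     -(1/(1-2*κ₁)),       0, 1,    0;
        1,    0,    2*κ₁,           -(1/(1-2*κ₁)) - lam, 0, 0,    0;
        0,    0,    2*κ₁,           -(1/(1-2*κ₁)),       0, -lam, 0;
        0,    1,    2*κ₁,           -(1/(1-2*κ₁)),       0, 0,    -lam] :
      Matrix (Fin 7) (Fin 7) ℝ).det = 0 :=
  stmt15_general lam κ₁ d₂
end
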